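/- In the formal power series ring R⟦x,t⟧ the following factorization holds: ∑_{n≥k≥0} B^0_{n,k} x^n t^k/n! = ( ∑_{n,r≥0} ∂^n(b_1^r) · x^{n+r} t^r/(n!·r!) ) · exp( −t·∑_{i≥2} ((i−1)/i!)·b_i x^i ). -/

import Mathlib

/-!
Write `B(x) = ∑_{i≥1} b_i x^i/i!` and `B'(x) = ∑_{n≥0} b_{n+1} x^n/n!`. The left-hand side is
`exp(t·B)`, the first factor on the right is `exp(t·x·B')`, and the argument of the second
exponential is `t·(B − x·B')`, so the identity is `exp(u + v) = exp u · exp v`.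

Both identifications rest on the coefficientwise extension `∂̃` of `∂` to `R⟦x⟧`, which is again a
derivation. Since `∂̃B = d/dx B − b_1`, we get `∂̃(B^k) = d/dx (B^k) − k·b_1·B^(k−1)`; on
coefficients this says that `(n!/k!)·[x^n] B^k` satisfies the recursion
`B_{n+1,k} = b_1·B_{n,k−1} + ∂B_{n,k}` of the Bell polynomials, so it equals `B_{n,k}`.
Since `∂̃B' = d/dx B'`, we get `∂̃(B'^r) = d/dx (B'^r)`, whence `[x^m] B'^r = ∂^m(b_1^r)/m!`.
Finally `exp(u + v) = exp u · exp v` holds modulo the ideal of series of order `≥ N` for every `N`,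
because there `u` and `v` are nilpotent.
-/

noncomputable section

/-- `R = ℚ[a_1,a_2,…;b_1,b_2,…]`, realized as the polynomial ring over `ℚ` with variables
`X (true, i) = a_i` and `X (false, i) = b_i`. -/
abbrev RR : Type := MvPolynomial (Bool × ℕ) ℚ

/-- the variable `a_i` -/
def va (i : ℕ) : RR := MvPolynomial.X (true, i)
/-- the variable `b_i` -/
def vb (i : ℕ) : RR := MvPolynomial.X (false, i)

/-- the derivation `∂` of `R` with `∂ a_i = a_{i+1}` and `∂ b_i = b_{i+1}` -/
def del : RR → RR :=
  fun p => MvPolynomial.mkDerivation ℚ (fun s : Bool × ℕ => MvPolynomial.X (s.1, s.2 + 1)) p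

/-- coefficientwise extension of a map on coefficients to `A[t]` (i.e. `∂` with `∂ t = 0`) -/
def polyLift {A : Type*} [Semiring A] (D : A → A) (p : Polynomial A) : Polynomial A :=
  p.sum fun i c => Polynomial.C (D c) * Polynomial.X ^ i

/-- the map `E : R[t] → R[t]`, `E(p) = t·b_1·p + ∂(p)` -/
def EOp (p : Polynomial RR) : Polynomial RR :=
  Polynomial.C (vb 1) * Polynomial.X * p + polyLift del p

/-- the partial `r`-Bell polynomial `B^r_{n+r,k+r}`: the coefficient of `t^k` in `E^n(a_1^r)` -/
def rBell (n k r : ℕ) : RR := (EOp^[n] (Polynomial.C (va 1 ^ r))).coeff k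

/-- Exponential of a formal multivariate power series (intended for series with zero
constant term): `exp(u) = ∑_{j≥0} u^j/j!`; for a series `u` of positive order only the
terms with `j ≤ |d|` contribute to the coefficient of a monomial of total degree `|d|`. -/
def sexp {σ : Type*} {A : Type*} [Ring A] [Algebra ℚ A] (u : MvPowerSeries σ A) :
    MvPowerSeries σ A :=
  fun d => MvPowerSeries.coeff d
    (∑ j ∈ Finset.range (d.sum (fun _ m => m) + 1), (j.factorial : ℚ)⁻¹ • u ^ j)

/-- The series `S°(t,x) = ∑_{n≥k≥0} B^0_{n,k} x^n t^k/n!` in `R⟦x,t⟧`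
(coordinates `0 ↦ x`, `1 ↦ t`). -/
def Scirc : MvPowerSeries (Fin 2) RR :=
  fun d => if d 1 ≤ d 0 then ((d 0).factorial : ℚ)⁻¹ • rBell (d 0) (d 1) 0 else 0

/-- The series `S^*(x,xt) = ∑_{n,r≥0} ∂^n(b_1^r)·x^{n+r} t^r/(n!·r!)` in `R⟦x,t⟧`:
the coefficient of `x^α t^γ` is `∂^{α-γ}(b_1^γ)/((α-γ)!·γ!)` when `γ ≤ α`,
and `0` otherwise. -/
def Sstar : MvPowerSeries (Fin 2) RR :=
  fun d => if d 1 ≤ d 0 then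
    (((d 0 - d 1).factorial * (d 1).factorial : ℚ))⁻¹ • del^[d 0 - d 1] (vb 1 ^ d 1)
  else 0

/-- the series `−t·∑_{i≥2} ((i−1)/i!)·b_i x^i` in `R⟦x,t⟧` -/
def Zarg2 : MvPowerSeries (Fin 2) RR :=
  fun d => if d 1 = 1 ∧ 2 ≤ d 0 then
    (-(((d 0 : ℚ) - 1) / ((d 0).factorial : ℚ))) • vb (d 0)
  else 0

open Finset

namespace MvPowerSeries

variable {σ A : Type*} [CommRing A]

theorem coeff_pow_eq_zero_of_degree_lt {u : MvPowerSeries σ A} (hu : constantCoeff u = 0)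
    {d : σ →₀ ℕ} {j : ℕ} (h : d.degree < j) : coeff d (u ^ j) = 0 :=
  coeff_of_lt_order ((Nat.cast_lt.2 h).trans_le (le_order_pow_of_constantCoeff_eq_zero j hu))

def orderGeIdeal (n : ℕ) : Ideal (MvPowerSeries σ A) where
  carrier := {f | (n : ℕ∞) ≤ f.order}
  add_mem' ha hb := (le_min ha hb).trans min_order_le_add
  zero_mem' := by simp
  smul_mem' _ _ hf := hf.trans (le_add_self.trans le_order_mul)

theorem coeff_eq_of_mk_orderGeIdeal_eq {n : ℕ} {f g : MvPowerSeries σ A}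
    (h : Ideal.Quotient.mk (orderGeIdeal n) f = Ideal.Quotient.mk _ g) {d : σ →₀ ℕ}
    (hd : d.degree < n) : coeff d f = coeff d g :=
  sub_eq_zero.1 <| by
    rw [← map_sub]
    exact coeff_of_lt_order ((Nat.cast_lt.2 hd).trans_le (Ideal.Quotient.eq.1 h))

theorem mk_orderGeIdeal_pow_eq_zero {u : MvPowerSeries σ A} (hu : constantCoeff u = 0)
    (n : ℕ) : Ideal.Quotient.mk (orderGeIdeal n) u ^ n = 0 := by
  rw [← map_pow, Ideal.Quotient.eq_zero_iff_mem]
  exact le_order_pow_of_constantCoeff_eq_zero n hu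

variable [Algebra ℚ A]

theorem coeff_sexp_of_degree_lt {u : MvPowerSeries σ A} (hu : constantCoeff u = 0)
    {d : σ →₀ ℕ} {N : ℕ} (h : d.degree < N) :
    coeff d (sexp u) = coeff d (∑ j ∈ range N, (j.factorial : ℚ)⁻¹ • u ^ j) := by
  change coeff d (∑ j ∈ range (d.degree + 1), (j.factorial : ℚ)⁻¹ • u ^ j) = _
  simp only [map_sum]
  refine sum_subset (range_subset_range.2 h) fun j _ hj => ?_
  rw [LinearMap.map_smul_of_tower, coeff_pow_eq_zero_of_degree_lt hu (by simpa using hj),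
    smul_zero]

theorem mk_orderGeIdeal_sexp {u : MvPowerSeries σ A} (hu : constantCoeff u = 0) (n : ℕ) :
    Ideal.Quotient.mk (orderGeIdeal n) (sexp u) = IsNilpotent.exp (Ideal.Quotient.mk _ u) := by
  rw [IsNilpotent.exp_eq_sum (mk_orderGeIdeal_pow_eq_zero hu n),
    Ideal.Quotient.eq.2 (?_ : sexp u - ∑ j ∈ range n, (j.factorial : ℚ)⁻¹ • u ^ j ∈ _)]
  · rw [← Ideal.Quotient.mkₐ_eq_mk ℚ]
    simp only [map_sum, map_smul, map_pow]
  · refine nat_le_order fun d hd => ?_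
    rw [map_sub, coeff_sexp_of_degree_lt hu hd, sub_self]

theorem sexp_add {u v : MvPowerSeries σ A} (hu : constantCoeff u = 0)
    (hv : constantCoeff v = 0) : sexp (u + v) = sexp u * sexp v := by
  ext d
  refine coeff_eq_of_mk_orderGeIdeal_eq ?_ (Nat.lt_succ_self d.degree)
  rw [map_mul, mk_orderGeIdeal_sexp hu, mk_orderGeIdeal_sexp hv,
    mk_orderGeIdeal_sexp (by simp [hu, hv]), map_add,
    IsNilpotent.exp_add_of_commute (Commute.all _ _) ⟨_, mk_orderGeIdeal_pow_eq_zero hu _⟩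
      ⟨_, mk_orderGeIdeal_pow_eq_zero hv _⟩]

end MvPowerSeries

namespace Derivation

open PowerSeries

variable {R A : Type*} [CommSemiring R]

def mapCoeffsPowerSeries [CommSemiring A] [Algebra R A] (D : Derivation R A A) :
    Derivation R A⟦X⟧ A⟦X⟧ where
  toFun f := PowerSeries.mk fun n => D (coeff n f)
  map_add' f g := by ext; simp
  map_smul' r f := by ext; simp
  map_one_eq_zero' := by ext n; simp [coeff_one, apply_ite D]
  leibniz' f g := by
    ext n
    simp only [LinearMap.coe_mk, AddHom.coe_mk, coeff_mk, coeff_mul, map_add, map_sum, leibniz,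
      smul_eq_mul, sum_add_distrib]
    rw [← Nat.sum_antidiagonal_swap (f := fun x => coeff x.1 g * D (coeff x.2 f))]
    rfl

@[simp]
theorem coeff_mapCoeffsPowerSeries [CommSemiring A] [Algebra R A] (D : Derivation R A A)
    (f : A⟦X⟧) (n : ℕ) : coeff n (D.mapCoeffsPowerSeries f) = D (coeff n f) :=
  coeff_mk n fun n => D (coeff n f)

variable [CommRing A] [Algebra R A] (D : Derivation R A A)

theorem mapCoeffsPowerSeries_pow {W : A⟦X⟧} {c : A}
    (hW : D.mapCoeffsPowerSeries W = d⁄dX A W - C c) (j : ℕ) :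
    D.mapCoeffsPowerSeries (W ^ j) = d⁄dX A (W ^ j) - j • (C c * W ^ (j - 1)) := by
  rw [leibniz_pow, derivative_pow, hW, smul_eq_mul, nsmul_eq_mul, nsmul_eq_mul]
  ring

theorem apply_coeff_pow {W : A⟦X⟧} {c : A}
    (hW : D.mapCoeffsPowerSeries W = d⁄dX A W - C c) (j n : ℕ) :
    D (coeff n (W ^ j)) = (n + 1) * coeff (n + 1) (W ^ j) - j • (c * coeff n (W ^ (j - 1))) := by
  have h := congrArg (coeff n) (D.mapCoeffsPowerSeries_pow hW j)
  rw [coeff_mapCoeffsPowerSeries] at h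
  rw [h, map_sub, coeff_derivative, map_nsmul, coeff_C_mul, mul_comm]

theorem iterate_constantCoeff_eq_factorial_smul_coeff {F : A⟦X⟧}
    (hF : D.mapCoeffsPowerSeries F = d⁄dX A F) (m : ℕ) :
    D^[m] (constantCoeff F) = m.factorial • coeff m F := by
  induction m with
  | zero => simp
  | succ m ih =>
    rw [Function.iterate_succ_apply', ih, map_nsmul, ← coeff_mapCoeffsPowerSeries, hF,
      coeff_derivative, Nat.factorial_succ, mul_nsmul, nsmul_eq_mul, mul_comm]
    ring

end Derivation

namespace MvPowerSeries

variable {A : Type*} [CommRing A]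

/-- `t · W(x)` in `A⟦x, t⟧`, where `x = X 0` and `t = X 1`. -/
def tMul (W : PowerSeries A) : MvPowerSeries (Fin 2) A :=
  X 1 * rename (fun _ : Unit => (0 : Fin 2)) W

theorem coeff_X_one_pow_mul_rename (W : PowerSeries A) (j : ℕ) (d : Fin 2 →₀ ℕ) :
    coeff d (X 1 ^ j * rename (fun _ : Unit => (0 : Fin 2)) W) =
      if d 1 = j then PowerSeries.coeff (d 0) W else 0 := by
  let e : Unit ↪ Fin 2 := Function.Embedding.punit 0
  rw [X_pow_eq, coeff_monomial_mul, one_mul]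
  by_cases hle : Finsupp.single 1 j ≤ d
  · rw [if_pos hle]
    by_cases hd : d 1 = j
    · have hsub : d - Finsupp.single 1 j = Finsupp.embDomain e (Finsupp.single () (d 0)) := by
        ext i; fin_cases i <;> simp [e, hd, Function.Embedding.punit]
      rw [if_pos hd, hsub]
      exact coeff_embDomain_rename e W _
    · rw [if_neg hd]
      have hj : j ≤ d 1 := by simpa using hle 1
      refine coeff_rename_eq_zero _ _ fun ⟨y, hy⟩ => hd ?_
      have h1 := DFunLike.congr_fun hy 1
      rw [Finsupp.mapDomain_of_notMem_range _ _ (by simp), Finsupp.tsub_apply,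
        Finsupp.single_eq_same] at h1
      omega
  · rw [if_neg hle, if_neg]
    rintro hd
    exact hle fun i => by fin_cases i <;> simp [hd]

theorem coeff_tMul_pow (W : PowerSeries A) (j : ℕ) (d : Fin 2 →₀ ℕ) :
    coeff d (tMul W ^ j) = if d 1 = j then PowerSeries.coeff (d 0) (W ^ j) else 0 := by
  rw [tMul, mul_pow, ← map_pow, coeff_X_one_pow_mul_rename]

theorem coeff_tMul (W : PowerSeries A) (d : Fin 2 →₀ ℕ) :
    coeff d (tMul W) = if d 1 = 1 then PowerSeries.coeff (d 0) W else 0 := by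
  simpa using coeff_tMul_pow W 1 d

theorem tMul_sub (V W : PowerSeries A) : tMul (V - W) = tMul V - tMul W := by
  rw [tMul, tMul, tMul, map_sub, mul_sub]

theorem constantCoeff_tMul (W : PowerSeries A) : constantCoeff (tMul W) = 0 := by
  simp [tMul]

theorem coeff_sexp_tMul [Algebra ℚ A] (W : PowerSeries A) (d : Fin 2 →₀ ℕ) :
    coeff d (sexp (tMul W)) = ((d 1).factorial : ℚ)⁻¹ • PowerSeries.coeff (d 0) (W ^ d 1) := by
  have hd : d 1 < d.degree + 1 := by
    rw [Finsupp.degree_eq_sum, Fin.sum_univ_two]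
    omega
  rw [coeff_sexp_of_degree_lt (constantCoeff_tMul W) (Nat.lt_succ_self _), map_sum,
    sum_eq_single (d 1)]
  · rw [LinearMap.map_smul_of_tower, coeff_tMul_pow, if_pos rfl]
  · intro j _ hj
    rw [LinearMap.map_smul_of_tower, coeff_tMul_pow, if_neg (Ne.symm hj), smul_zero]
  · exact fun h => absurd (mem_range.2 hd) h

end MvPowerSeries

theorem natCast_add_one_mul_inv_factorial_succ_smul {M : Type*} [Ring M] [Module ℚ M] (n : ℕ)
    (p : M) : ((n : M) + 1) * (((n + 1).factorial : ℚ)⁻¹ • p) = (n.factorial : ℚ)⁻¹ • p := by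
  rw [← Nat.cast_succ, ← nsmul_eq_mul, ← Nat.cast_smul_eq_nsmul ℚ, smul_smul, Nat.factorial_succ]
  congr 1
  push_cast
  field_simp

open PowerSeries

def delDerivation : Derivation ℚ RR RR :=
  MvPolynomial.mkDerivation ℚ fun s : Bool × ℕ => MvPolynomial.X (s.1, s.2 + 1)

theorem del_eq_delDerivation : del = delDerivation := rfl

theorem delDerivation_vb (i : ℕ) : delDerivation (vb i) = vb (i + 1) :=
  MvPolynomial.mkDerivation_X ℚ _ _

def bEgf : RR⟦X⟧ :=
  PowerSeries.mk fun n => if n = 0 then 0 else (n.factorial : ℚ)⁻¹ • vb n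

def bEgfDeriv : RR⟦X⟧ :=
  PowerSeries.mk fun n => (n.factorial : ℚ)⁻¹ • vb (n + 1)

theorem mapCoeffsPowerSeries_bEgf :
    delDerivation.mapCoeffsPowerSeries bEgf = d⁄dX RR bEgf - C (vb 1) := by
  refine PowerSeries.ext fun n => ?_
  rw [Derivation.coeff_mapCoeffsPowerSeries, map_sub, coeff_derivative, coeff_C, bEgf, coeff_mk,
    coeff_mk, if_neg n.succ_ne_zero, mul_comm, natCast_add_one_mul_inv_factorial_succ_smul]
  rcases n with _ | n
  · simp
  · simp [delDerivation_vb]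

theorem mapCoeffsPowerSeries_bEgfDeriv :
    delDerivation.mapCoeffsPowerSeries bEgfDeriv = d⁄dX RR bEgfDeriv := by
  refine PowerSeries.ext fun n => ?_
  rw [Derivation.coeff_mapCoeffsPowerSeries, coeff_derivative, bEgfDeriv, coeff_mk, coeff_mk,
    mul_comm, natCast_add_one_mul_inv_factorial_succ_smul, Derivation.map_smul, delDerivation_vb]

theorem iterate_del_vb_one_pow (m r : ℕ) :
    del^[m] (vb 1 ^ r) = m.factorial • coeff m (bEgfDeriv ^ r) := by
  have hF : delDerivation.mapCoeffsPowerSeries (bEgfDeriv ^ r) = d⁄dX RR (bEgfDeriv ^ r) := by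
    simpa using delDerivation.mapCoeffsPowerSeries_pow (c := 0)
      (by simpa using mapCoeffsPowerSeries_bEgfDeriv) r
  rw [← delDerivation.iterate_constantCoeff_eq_factorial_smul_coeff hF, map_pow]
  simp [bEgfDeriv, del_eq_delDerivation]

theorem coeff_polyLift_del (p : Polynomial RR) (k : ℕ) :
    (polyLift del p).coeff k = del (p.coeff k) := by
  rw [polyLift, Polynomial.sum_def, Polynomial.finsetSum_coeff]
  simp only [Polynomial.coeff_C_mul, Polynomial.coeff_X_pow, mul_ite, mul_one, mul_zero,
    sum_ite_eq]
  split_ifs with h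
  · rfl
  · rw [Polynomial.notMem_support_iff.1 h, del_eq_delDerivation, map_zero]

theorem rBell_zero_left (k : ℕ) : rBell 0 k 0 = if k = 0 then 1 else 0 := by
  rw [rBell, Function.iterate_zero_apply, pow_zero, map_one, Polynomial.coeff_one, eq_comm]

theorem rBell_succ_zero (n : ℕ) : rBell (n + 1) 0 0 = del (rBell n 0 0) := by
  rw [rBell, Function.iterate_succ_apply', EOp, Polynomial.coeff_add, coeff_polyLift_del,
    mul_assoc, Polynomial.coeff_C_mul, Polynomial.coeff_X_mul_zero, mul_zero, zero_add, rBell]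

theorem rBell_succ_succ (n k : ℕ) :
    rBell (n + 1) (k + 1) 0 = vb 1 * rBell n k 0 + del (rBell n (k + 1) 0) := by
  rw [rBell, Function.iterate_succ_apply', EOp, Polynomial.coeff_add, coeff_polyLift_del,
    mul_assoc, Polynomial.coeff_C_mul, Polynomial.coeff_X_mul, rBell, rBell]

theorem factorial_smul_rBell (n k : ℕ) :
    k.factorial • rBell n k 0 = n.factorial • coeff n (bEgf ^ k) := by
  induction n generalizing k with
  | zero =>
    rcases k with _ | k
    · simp [rBell_zero_left]
    · simp [rBell_zero_left, bEgf]
  | succ n ih =>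
    rcases k with _ | k
    · have h0 := ih 0
      simp only [Nat.factorial_zero, one_smul, pow_zero, coeff_one] at h0
      rw [Nat.factorial_zero, one_smul, rBell_succ_zero, h0, pow_zero, coeff_one,
        if_neg n.succ_ne_zero, smul_zero]
      split_ifs <;> simp [del_eq_delDerivation]
    · have hk := ih k
      have hdel := congrArg delDerivation (ih (k + 1))
      rw [map_nsmul, map_nsmul] at hdel
      have hstep := delDerivation.apply_coeff_pow mapCoeffsPowerSeries_bEgf (k + 1) n
      rw [rBell_succ_succ, del_eq_delDerivation]
      simp only [nsmul_eq_mul, Nat.factorial_succ, Nat.cast_mul, Nat.cast_succ,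
        Nat.add_sub_cancel] at hk hdel hstep ⊢
      linear_combination ((k : RR) + 1) * vb 1 * hk + hdel + (n.factorial : RR) * hstep

theorem coeff_bEgf_pow_of_lt {n k : ℕ} (h : n < k) : coeff n (bEgf ^ k) = 0 := by
  have hX : X ∣ bEgf := X_dvd_iff.2 (by simp [bEgf])
  exact X_pow_dvd_iff.1 (pow_dvd_pow_of_dvd hX k) n h

theorem Scirc_eq_sexp : Scirc = sexp (MvPowerSeries.tMul bEgf) := by
  refine MvPowerSeries.ext fun d => ?_
  rw [MvPowerSeries.coeff_sexp_tMul]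
  change (if d 1 ≤ d 0 then _ else 0) = _
  split_ifs with h
  · have hB := factorial_smul_rBell (d 0) (d 1)
    rw [← Nat.cast_smul_eq_nsmul ℚ, ← Nat.cast_smul_eq_nsmul ℚ] at hB
    rw [inv_smul_eq_iff₀ (by positivity), smul_comm, eq_inv_smul_iff₀ (by positivity), hB]
  · rw [coeff_bEgf_pow_of_lt (by omega), smul_zero]

theorem Sstar_eq_sexp : Sstar = sexp (MvPowerSeries.tMul (X * bEgfDeriv)) := by
  refine MvPowerSeries.ext fun d => ?_
  rw [MvPowerSeries.coeff_sexp_tMul, mul_pow, coeff_X_pow_mul']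
  change (if d 1 ≤ d 0 then _ else 0) = _
  split_ifs with h
  · rw [iterate_del_vb_one_pow, ← Nat.cast_smul_eq_nsmul ℚ, smul_smul]
    congr 1
    field_simp
  · rw [smul_zero]

theorem coeff_bEgf_sub_X_mul_bEgfDeriv (n : ℕ) :
    coeff n (bEgf - X * bEgfDeriv) =
      if 2 ≤ n then (-(((n : ℚ) - 1) / n.factorial)) • vb n else 0 := by
  rcases n with _ | _ | n
  · simp [bEgf]
  · simp [bEgf, bEgfDeriv]
  · rw [if_pos (by omega), map_sub, coeff_succ_X_mul, bEgf, bEgfDeriv, coeff_mk, coeff_mk,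
      if_neg (by omega), ← sub_smul]
    congr 1
    rw [Nat.factorial_succ (n + 1)]
    push_cast
    field_simp
    ring

theorem Zarg2_eq_tMul_sub :
    Zarg2 = MvPowerSeries.tMul bEgf - MvPowerSeries.tMul (X * bEgfDeriv) := by
  refine MvPowerSeries.ext fun d => ?_
  rw [← MvPowerSeries.tMul_sub, MvPowerSeries.coeff_tMul, coeff_bEgf_sub_X_mul_bEgfDeriv]
  change (if d 1 = 1 ∧ 2 ≤ d 0 then _ else 0) = _
  by_cases h1 : d 1 = 1 <;> simp [h1]

/-- In `R⟦x,t⟧`,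
`∑_{n≥k≥0} B^0_{n,k} x^n t^k/n! =
  (∑_{n,r≥0} ∂^n(b_1^r)·x^{n+r} t^r/(n!·r!)) · exp(−t·∑_{i≥2} ((i−1)/i!)·b_i x^i)`. -/
theorem stmt6 : Scirc = Sstar * sexp Zarg2 := by
  rw [Scirc_eq_sexp, Sstar_eq_sexp, Zarg2_eq_tMul_sub,
    ← MvPowerSeries.sexp_add (MvPowerSeries.constantCoeff_tMul _)
      (by rw [map_sub, MvPowerSeries.constantCoeff_tMul, MvPowerSeries.constantCoeff_tMul,
        sub_self]),
    add_sub_cancel]
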